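/- A spiky function λ on E_n is the connectivity function of a matroid if and only if there is an independent set I of the hypercube graph H_n such that for every transversal X, λ(X) = n − |I ∩ {X, E_n − X}|. -/

import Mathlib

/-- The ground set of a rank-`n` spike: `n` disjoint legs, where the leg `i` consists of
`x_i = (i, true)` and `y_i = (i, false)`. -/
abbrev En (n : ℕ) := Fin n × Bool

/-- The `i`-th leg `L_i = {x_i, y_i}`. -/
def leg (n : ℕ) (i : Fin n) : Set (En n) := {(i, true), (i, false)}

/-- A transversal: a set containing exactly one element of each leg. -/
def IsTransversal {n : ℕ} (X : Set (En n)) : Prop :=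
  ∀ i : Fin n, ((i, true) ∈ X ∧ (i, false) ∉ X) ∨ ((i, true) ∉ X ∧ (i, false) ∈ X)

/-- The hypercube graph `H_n` on transversals: two transversals are adjacent iff they
differ in exactly one element (i.e. their symmetric difference has two elements). -/
def Hn (n : ℕ) : SimpleGraph (Set (En n)) where
  Adj X Y := IsTransversal X ∧ IsTransversal Y ∧ (symmDiff X Y).ncard = 2
  symm := ⟨fun X Y ⟨h1, h2, h3⟩ => ⟨h2, h1, by rwa [symmDiff_comm]⟩⟩
  loopless := ⟨fun X ⟨_, _, h3⟩ => by
    simp [symmDiff_self, Set.bot_eq_empty] at h3⟩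

/-- `I` is an independent set of the hypercube graph `H_n`. -/
def IndepInHn (n : ℕ) (I : Set (Set (En n))) : Prop :=
  (∀ X ∈ I, IsTransversal X) ∧ ∀ X ∈ I, ∀ Y ∈ I, ¬ (Hn n).Adj X Y

/-- `l(X)`: the number of legs which `X` meets. -/
noncomputable def legCount {n : ℕ} (X : Set (En n)) : ℕ :=
  Set.ncard {i : Fin n | (i, true) ∈ X ∨ (i, false) ∈ X}

/-- The rank of a set `X` in a matroid `M`: the largest cardinality of an independent
subset of `X`. -/
noncomputable def mrank {α : Type*} (M : Matroid α) (X : Set α) : ℕ :=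
  sSup {k | ∃ I, M.Indep I ∧ I ⊆ X ∧ I.ncard = k}

/-- The connectivity function of a matroid: μ_M(X) = r(X) + r(E−X) − r(E). -/
noncomputable def mconn {α : Type*} (M : Matroid α) (X : Set α) : ℤ :=
  (mrank M X : ℤ) + (mrank M (M.E \ X) : ℤ) - (mrank M M.E : ℤ)

/-- A circuit of a matroid: a minimal dependent subset of the ground set. -/
def IsCircuit {α : Type*} (M : Matroid α) (C : Set α) : Prop :=
  C ⊆ M.E ∧ ¬ M.Indep C ∧ ∀ D ⊂ C, M.Indep D

/-- The circuits `{x_i, y_i, x_j, y_j}` for `i < j` (i.e. unions of two distinct legs). -/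
def LegPairs (n : ℕ) : Set (Set (En n)) :=
  {C | ∃ i j : Fin n, i ≠ j ∧ C = leg n i ∪ leg n j}

/-- The circuit collection of the spike `S(I)`: unions of two legs, the transversals
in `I`, and all `(n+1)`-element sets containing none of the preceding circuits. -/
def SpikeCircuits (n : ℕ) (I : Set (Set (En n))) : Set (Set (En n)) :=
  (LegPairs n ∪ I) ∪ {C | C.ncard = n + 1 ∧ ∀ D ∈ LegPairs n ∪ I, ¬ D ⊆ C}

open Classical in
/-- The rank function of the free spike `S(∅)` (every rank-`n` spike has this rank
function away from the transversals). -/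
noncomputable def freeSpikeRank (n : ℕ) (X : Set (En n)) : ℕ :=
  if ∀ i : Fin n, ¬ Disjoint (leg n i) X then n
  else if ∃ i, leg n i ⊆ X then legCount X + 1
  else X.ncard

/-- `λ_n(X) = r_n(X) + r_n(E_n − X) − n`: the common value of the connectivity function
of any rank-`n` spike on a non-transversal set `X`. -/
noncomputable def lamN (n : ℕ) (X : Set (En n)) : ℤ :=
  (freeSpikeRank n X : ℤ) + (freeSpikeRank n Xᶜ : ℤ) - (n : ℤ)

/-- A spiky function: symmetric, extends `λ_n` on non-transversals, takes values in
`{n−2, n−1, n}` on transversals, and satisfies `λ(X) + λ(Y) ≥ 2n−2` for transversals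
`X`, `Y` differing in exactly one element. -/
noncomputable def IsSpiky (n : ℕ) (lam : Set (En n) → ℕ) : Prop :=
  (∀ X, lam X = lam Xᶜ) ∧
  (∀ X, ¬ IsTransversal X → (lam X : ℤ) = lamN n X) ∧
  (∀ X, IsTransversal X → lam X = n - 2 ∨ lam X = n - 1 ∨ lam X = n) ∧
  (∀ X Y, IsTransversal X → IsTransversal Y → (symmDiff X Y).ncard = 2 →
    2 * n - 2 ≤ lam X + lam Y)

/-!
If `λ = λ_M`, a non-transversal `X` with `λ_n(X) = n` forces `r(E) = n`. For a transversal `X`,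
the values of `λ_n` on the non-transversals `X - L_i` and `X ∪ L_i` force their ranks to be
`n - 1` and `n`. These are the intersection and the union of the adjacent transversals `X` and
`X Δ L_i`, so submodularity gives `r(X) + r(X Δ L_i) ≥ 2n - 1`: the transversals of rank `n - 1`
form an independent set `I` of `H_n`, and `λ(X) = r(X) + r(E - X) - n` counts the members of `I`
among `X` and `E - X`.

Conversely, the sets of size at most `n` that contain at most one leg and do not lie in `I` are
the independent sets of a matroid `S(I)`: augmentation can only fail at two transversals of `I`
that differ in one element. The rank of `S(I)` is `n - 1` on `I` and the rank of the free spike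
elsewhere, so its connectivity function is `λ`.
-/

open Set

lemma ncard_inter_pair {β : Type*} (S : Set β) [DecidablePred (· ∈ S)] {a b : β}
    (hab : a ≠ b) :
    (S ∩ {a, b}).ncard = (if a ∈ S then 1 else 0) + (if b ∈ S then 1 else 0) := by
  by_cases ha : a ∈ S <;> by_cases hb : b ∈ S <;>
    simp [ha, hb, inter_insert_of_mem, inter_insert_of_notMem, ncard_pair hab]

lemma symmDiff_insert_insert {α : Type*} {s : Set α} {a b : α} (ha : a ∉ s) (hb : b ∉ s)
    (hab : a ≠ b) : symmDiff (insert a s) (insert b s) = {a, b} := by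
  ext x
  simp only [mem_symmDiff, mem_insert_iff, mem_singleton_iff]
  grind

section Rank

variable {α : Type*} {M : Matroid α} {I X Y : Set α} {k : ℕ}

lemma mrank_le (h : ∀ I, M.Indep I → I ⊆ X → I.ncard ≤ k) : mrank M X ≤ k :=
  csSup_le ⟨0, ∅, M.empty_indep, empty_subset X, ncard_empty α⟩
    (by rintro _ ⟨I, hI, hIX, rfl⟩; exact h I hI hIX)

variable [Finite α]

lemma bddAbove_indep_ncard (M : Matroid α) (X : Set α) :
    BddAbove {k | ∃ I, M.Indep I ∧ I ⊆ X ∧ I.ncard = k} :=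
  ⟨X.ncard, by rintro _ ⟨I, -, hIX, rfl⟩; exact ncard_le_ncard hIX⟩

lemma le_mrank (hI : M.Indep I) (hIX : I ⊆ X) : I.ncard ≤ mrank M X :=
  le_csSup (bddAbove_indep_ncard M X) ⟨I, hI, hIX, rfl⟩

lemma cast_mrank (M : Matroid α) (X : Set α) : (mrank M X : ℕ∞) = M.eRk X := by
  refine le_antisymm ?_ (M.eRk_le_iff.2 fun I hIX hI => ?_)
  · obtain ⟨I, hI, hIX, hcard⟩ :=
      Nat.sSup_mem (s := {k | ∃ I, M.Indep I ∧ I ⊆ X ∧ I.ncard = k})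
        ⟨0, ∅, M.empty_indep, empty_subset X, ncard_empty α⟩ (bddAbove_indep_ncard M X)
    exact M.le_eRk_iff.2 ⟨I, hIX, hI, by rw [← (toFinite I).cast_ncard_eq, hcard, mrank]⟩
  · rw [← (toFinite I).cast_ncard_eq]
    exact_mod_cast le_mrank hI hIX

lemma mrank_mono (h : X ⊆ Y) : mrank M X ≤ mrank M Y := by
  have := M.eRk_mono h
  rwa [← cast_mrank, ← cast_mrank, Nat.cast_le] at this

lemma mrank_le_ncard (M : Matroid α) (X : Set α) : mrank M X ≤ X.ncard :=
  mrank_le fun _ _ hIX => ncard_le_ncard hIX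

lemma mrank_inter_add_mrank_union_le (M : Matroid α) (X Y : Set α) :
    mrank M (X ∩ Y) + mrank M (X ∪ Y) ≤ mrank M X + mrank M Y := by
  have := M.eRk_inter_add_eRk_union_le X Y
  simp only [← cast_mrank] at this
  exact_mod_cast this

end Rank

section Legs

variable {n : ℕ} {X Y J : Set (En n)} {i j : Fin n} {e p : En n}

def metLegs (X : Set (En n)) : Set (Fin n) := {i | (i, true) ∈ X ∨ (i, false) ∈ X}

def fullLegs (X : Set (En n)) : Set (Fin n) := {i | (i, true) ∈ X ∧ (i, false) ∈ X}

@[simp] lemma mem_metLegs : i ∈ metLegs X ↔ (i, true) ∈ X ∨ (i, false) ∈ X := Iff.rfl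

@[simp] lemma mem_fullLegs : i ∈ fullLegs X ↔ (i, true) ∈ X ∧ (i, false) ∈ X := Iff.rfl

@[simp] lemma mem_leg : p ∈ leg n i ↔ p.1 = i := by
  obtain ⟨k, b⟩ := p
  cases b <;> simp [leg]

lemma ncard_leg (n : ℕ) (i : Fin n) : (leg n i).ncard = 2 :=
  ncard_pair (by simp)

lemma leg_subset_iff : leg n i ⊆ X ↔ i ∈ fullLegs X := by
  simp [leg, insert_subset_iff]

lemma disjoint_leg_iff : Disjoint (leg n i) X ↔ i ∉ metLegs X := by
  simp [leg]

lemma metLegs_compl (X : Set (En n)) : metLegs Xᶜ = (fullLegs X)ᶜ := by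
  ext; simp [or_iff_not_and_not]

lemma fullLegs_compl (X : Set (En n)) : fullLegs Xᶜ = (metLegs X)ᶜ := by
  ext; simp

lemma metLegs_diff_leg (X : Set (En n)) (i : Fin n) : metLegs (X \ leg n i) = metLegs X \ {i} := by
  ext; simp; tauto

lemma fullLegs_diff_leg (X : Set (En n)) (i : Fin n) :
    fullLegs (X \ leg n i) = fullLegs X \ {i} := by
  ext; simp; tauto

lemma metLegs_mono (h : X ⊆ Y) : metLegs X ⊆ metLegs Y :=
  fun _ => Or.imp (@h _) (@h _)

lemma fullLegs_mono (h : X ⊆ Y) : fullLegs X ⊆ fullLegs Y :=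
  fun _ => And.imp (@h _) (@h _)

lemma ncard_eq_ncard_metLegs_add_ncard_fullLegs (X : Set (En n)) :
    X.ncard = (metLegs X).ncard + (fullLegs X).ncard := by
  have hX : X = (·, true) '' {i | (i, true) ∈ X} ∪ (·, false) '' {i | (i, false) ∈ X} := by
    ext ⟨i, b⟩; cases b <;> simp
  have hinj : ∀ b : Bool, Function.Injective fun i : Fin n => (i, b) :=
    fun _ _ _ h => (Prod.mk.inj h).1
  rw [metLegs, fullLegs, ofPred_or, ofPred_and, ncard_union_add_ncard_inter]
  conv_lhs => rw [hX]
  rw [ncard_union_eq (by simp [disjoint_left]), ncard_image_of_injective _ (hinj true),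
    ncard_image_of_injective _ (hinj false)]

lemma legCount_le (X : Set (En n)) : legCount X ≤ n :=
  (ncard_le_ncard (subset_univ (metLegs X))).trans_eq (by simp)

lemma isTransversal_iff : IsTransversal X ↔ metLegs X = univ ∧ fullLegs X = ∅ := by
  simp only [IsTransversal, eq_univ_iff_forall, eq_empty_iff_forall_notMem, mem_metLegs,
    mem_fullLegs, ← forall_and]
  exact forall_congr' fun i => by tauto

lemma IsTransversal.compl (hX : IsTransversal X) : IsTransversal Xᶜ := by
  rw [isTransversal_iff] at hX ⊢
  simp [metLegs_compl, fullLegs_compl, hX.1, hX.2]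

lemma IsTransversal.ncard_eq (hX : IsTransversal X) : X.ncard = n := by
  rw [ncard_eq_ncard_metLegs_add_ncard_fullLegs, (isTransversal_iff.1 hX).1,
    (isTransversal_iff.1 hX).2]
  simp

lemma IsTransversal.ne_compl (hn : 0 < n) (hX : IsTransversal X) : X ≠ Xᶜ := by
  intro h
  have := (isTransversal_iff.1 hX).1 ▸ mem_univ (⟨0, hn⟩ : Fin n)
  simp only [mem_metLegs] at this
  rcases this with h' | h' <;> exact (h ▸ h') h'

lemma not_isTransversal_of_mem_fullLegs (h : i ∈ fullLegs X) : ¬ IsTransversal X :=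
  fun hX => by simp [(isTransversal_iff.1 hX).2] at h

lemma not_isTransversal_of_notMem_metLegs (h : i ∉ metLegs X) : ¬ IsTransversal X :=
  fun hX => by simp [(isTransversal_iff.1 hX).1] at h

lemma mem_metLegs_of_mem (h : p ∈ X) : p.1 ∈ metLegs X := by
  obtain ⟨k, b⟩ := p
  cases b
  · exact Or.inr h
  · exact Or.inl h

lemma fullLegs_insert_subset (e : En n) (J : Set (En n)) :
    fullLegs (insert e J) ⊆ insert e.1 (fullLegs J) := by
  rintro k ⟨ht, hf⟩
  simp only [mem_insert_iff, Prod.ext_iff] at ht hf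
  simp only [mem_insert_iff, mem_fullLegs]
  grind

lemma fullLegs_insert_of_fst_notMem (he : e.1 ∉ metLegs J) :
    fullLegs (insert e J) = fullLegs J := by
  obtain ⟨k, b⟩ := e
  ext i
  simp only [mem_metLegs, not_or] at he
  by_cases hik : i = k
  · subst hik
    cases b <;> simp [he]
  · simp [hik]

lemma legCount_eq_ncard_metLegs (X : Set (En n)) : legCount X = (metLegs X).ncard := rfl

lemma legCount_eq_of_metLegs_eq_univ (h : metLegs X = univ) : legCount X = n := by
  simp [legCount_eq_ncard_metLegs, h]

lemma legCount_lt_of_metLegs_ne_univ (h : metLegs X ≠ univ) : legCount X < n :=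
  (ncard_lt_ncard (ssubset_univ_iff.2 h)).trans_eq (by simp)

lemma freeSpikeRank_eq_min (X : Set (En n)) :
    freeSpikeRank n X = min n (legCount X + min 1 (fullLegs X).ncard) := by
  have hall : (∀ i, ¬ Disjoint (leg n i) X) ↔ metLegs X = univ := by
    simp [disjoint_leg_iff, eq_univ_iff_forall, or_iff_not_imp_left]
  have hfull : (∃ i, leg n i ⊆ X) ↔ 0 < (fullLegs X).ncard := by
    simp only [leg_subset_iff, ncard_pos (toFinite _)]; rfl
  have hcard := ncard_eq_ncard_metLegs_add_ncard_fullLegs X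
  have hle := legCount_le X
  rw [← legCount_eq_ncard_metLegs] at hcard
  simp only [freeSpikeRank, hall, hfull]
  split_ifs with hmet hne
  · rw [legCount_eq_of_metLegs_eq_univ hmet]; omega
  · have := legCount_lt_of_metLegs_ne_univ hmet; omega
  · omega

lemma freeSpikeRank_of_metLegs_eq_univ (h : metLegs X = univ) : freeSpikeRank n X = n := by
  rw [freeSpikeRank_eq_min, legCount_eq_of_metLegs_eq_univ h]
  omega

lemma ncard_compl_singleton (i : Fin n) : ({i}ᶜ : Set (Fin n)).ncard = n - 1 := by
  rw [ncard_compl, ncard_singleton, Nat.card_eq_fintype_card, Fintype.card_fin]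

lemma freeSpikeRank_of_fullLegs_nonempty (hfull : (fullLegs X).Nonempty)
    (hmet : n - 1 ≤ legCount X) : freeSpikeRank n X = n := by
  have := (ncard_pos (toFinite _)).2 hfull
  have := legCount_le X
  rw [freeSpikeRank_eq_min]
  omega

lemma exists_lamN_eq (hn : 2 ≤ n) : ∃ X : Set (En n), ¬ IsTransversal X ∧ lamN n X = n := by
  set i : Fin n := ⟨0, by omega⟩
  set j : Fin n := ⟨1, by omega⟩
  have hij : i ≠ j := by simp [i, j, Fin.ext_iff]
  set X : Set (En n) := {p | p.1 ≠ j ∧ (p.2 = true ∨ p.1 = i)}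
  have hmet : metLegs X = {j}ᶜ := by ext; simp [X]; exact fun h _ => h
  have hfull : fullLegs X = {i} := by ext; simp [X]; rintro rfl; exact hij
  refine ⟨X, not_isTransversal_of_mem_fullLegs (hfull ▸ mem_singleton i), ?_⟩
  rw [lamN, freeSpikeRank_of_fullLegs_nonempty (by simp [hfull])
      (by rw [legCount_eq_ncard_metLegs, hmet, ncard_compl_singleton]),
    freeSpikeRank_of_fullLegs_nonempty (by simp [fullLegs_compl, hmet])
      (by rw [legCount_eq_ncard_metLegs, metLegs_compl, hfull, ncard_compl_singleton])]
  ring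

lemma IsTransversal.lamN_diff_leg (hX : IsTransversal X) (i : Fin n) :
    lamN n (X \ leg n i) = n - 1 := by
  obtain ⟨hmet, hfull⟩ := isTransversal_iff.1 hX
  have hZ : freeSpikeRank n (X \ leg n i) = n - 1 := by
    have : legCount (X \ leg n i) = n - 1 := by
      rw [legCount_eq_ncard_metLegs, metLegs_diff_leg, hmet, ← compl_eq_univ_sdiff,
        ncard_compl_singleton]
    rw [freeSpikeRank_eq_min, this, fullLegs_diff_leg, hfull]
    simp
  have hZc : freeSpikeRank n (X \ leg n i)ᶜ = n :=
    freeSpikeRank_of_metLegs_eq_univ (by simp [metLegs_compl, fullLegs_diff_leg, hfull])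
  have := i.pos
  rw [lamN, hZ, hZc]
  omega

lemma IsTransversal.exists_symmDiff_eq_leg (hX : IsTransversal X) (hY : IsTransversal Y)
    (h : (symmDiff X Y).ncard = 2) : ∃ i, symmDiff X Y = leg n i := by
  have hsat : metLegs (symmDiff X Y) = fullLegs (symmDiff X Y) := by
    ext k
    have := hX k
    have := hY k
    simp only [mem_metLegs, mem_fullLegs, mem_symmDiff]
    tauto
  have hfull : (fullLegs (symmDiff X Y)).ncard = 1 := by
    have := ncard_eq_ncard_metLegs_add_ncard_fullLegs (symmDiff X Y)
    rw [hsat] at this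
    omega
  obtain ⟨i, hi⟩ := ncard_eq_one.1 hfull
  refine ⟨i, ext fun ⟨k, b⟩ => ?_⟩
  rw [mem_leg, ← mem_singleton_iff, ← hi]
  refine ⟨fun hk => hsat ▸ mem_metLegs_of_mem hk, fun hk => ?_⟩
  cases b
  exacts [hk.2, hk.1]

lemma IsTransversal.ncard_diff_leg (hX : IsTransversal X) (i : Fin n) :
    (X \ leg n i).ncard = n - 1 := by
  obtain ⟨hmet, hfull⟩ := isTransversal_iff.1 hX
  rw [ncard_eq_ncard_metLegs_add_ncard_fullLegs, metLegs_diff_leg, fullLegs_diff_leg, hmet, hfull,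
    ← compl_eq_univ_sdiff, ncard_compl_singleton]
  simp

lemma not_isTransversal_diff_leg (X : Set (En n)) (i : Fin n) : ¬ IsTransversal (X \ leg n i) :=
  not_isTransversal_of_notMem_metLegs (i := i) (by simp [metLegs_diff_leg])

end Legs

section SpikeLike

variable {n : ℕ} {M : Matroid (En n)} {X Y : Set (En n)} {I : Set (Set (En n))}

def IsSpikeLike (M : Matroid (En n)) : Prop :=
  M.E = univ ∧ ∀ X, ¬ IsTransversal X → mconn M X = lamN n X

lemma mconn_eq_of_ground_eq_univ (hE : M.E = univ) (X : Set (En n)) :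
    mconn M X = mrank M X + mrank M Xᶜ - mrank M univ := by
  rw [mconn, hE, compl_eq_univ_sdiff]

lemma mrank_univ_eq_of_mconn_eq (hE : M.E = univ) (h : mconn M X = n) : mrank M univ = n := by
  rw [mconn_eq_of_ground_eq_univ hE] at h
  have h1 := mrank_mono (M := M) (subset_univ X)
  have h2 := mrank_mono (M := M) (subset_univ Xᶜ)
  have h3 := mrank_le_ncard M X
  have h4 := mrank_le_ncard M Xᶜ
  have h5 := ncard_add_ncard_compl X
  simp only [Nat.card_eq_fintype_card, Fintype.card_prod, Fintype.card_fin,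
    Fintype.card_bool] at h5
  omega

lemma IsTransversal.mrank_le (hX : IsTransversal X) : mrank M X ≤ n :=
  (mrank_le_ncard M X).trans_eq hX.ncard_eq

lemma IsSpikeLike.mrank_univ (hM : IsSpikeLike M) (hn : 2 ≤ n) : mrank M univ = n := by
  obtain ⟨X, hX, hlam⟩ := exists_lamN_eq hn
  exact mrank_univ_eq_of_mconn_eq hM.1 ((hM.2 X hX).trans hlam)

lemma IsSpikeLike.mrank_diff_leg_and_compl (hM : IsSpikeLike M) (hn : 2 ≤ n)
    (hX : IsTransversal X) (i : Fin n) :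
    mrank M (X \ leg n i) = n - 1 ∧ mrank M (X \ leg n i)ᶜ = n := by
  have hc := hM.2 _ (not_isTransversal_diff_leg X i)
  rw [hX.lamN_diff_leg, mconn_eq_of_ground_eq_univ hM.1, hM.mrank_univ hn] at hc
  have h1 := (mrank_le_ncard M (X \ leg n i)).trans_eq (hX.ncard_diff_leg i)
  have h2 := (mrank_mono (M := M) (subset_univ (X \ leg n i)ᶜ)).trans_eq (hM.mrank_univ hn)
  omega

lemma IsSpikeLike.mrank_diff_leg (hM : IsSpikeLike M) (hn : 2 ≤ n) (hX : IsTransversal X)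
    (i : Fin n) : mrank M (X \ leg n i) = n - 1 :=
  (hM.mrank_diff_leg_and_compl hn hX i).1

lemma IsSpikeLike.mrank_union_leg (hM : IsSpikeLike M) (hn : 2 ≤ n) (hX : IsTransversal X)
    (i : Fin n) : mrank M (X ∪ leg n i) = n := by
  have := (hM.mrank_diff_leg_and_compl hn hX.compl i).2
  rwa [compl_sdiff, compl_compl, union_comm] at this

lemma IsSpikeLike.le_mrank_add_mrank_of_adj (hM : IsSpikeLike M) (hn : 2 ≤ n)
    (hXY : (Hn n).Adj X Y) : 2 * n - 1 ≤ mrank M X + mrank M Y := by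
  obtain ⟨hX, hY, h⟩ := hXY
  obtain ⟨i, hi⟩ := hX.exists_symmDiff_eq_leg hY h
  have hinter : X ∩ Y = X \ leg n i := by rw [← hi, sdiff_symmDiff_left]; rfl
  have hunion : X ∪ Y = X ∪ leg n i := by
    rw [← hi]; ext; simp only [mem_union, mem_symmDiff]; tauto
  have := mrank_inter_add_mrank_union_le M X Y
  rw [hinter, hunion, hM.mrank_diff_leg hn hX i, hM.mrank_union_leg hn hX i] at this
  omega

lemma IsSpikeLike.le_mrank (hM : IsSpikeLike M) (hn : 2 ≤ n) (hX : IsTransversal X) :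
    n - 1 ≤ mrank M X :=
  (hM.mrank_diff_leg hn hX ⟨0, by omega⟩).symm.le.trans (mrank_mono sdiff_subset)

lemma IsSpikeLike.indepInHn (hM : IsSpikeLike M) (hn : 2 ≤ n) :
    IndepInHn n {X | IsTransversal X ∧ mrank M X < n} := by
  refine ⟨fun X hX => hX.1, fun X hX Y hY hXY => ?_⟩
  have := hM.le_mrank_add_mrank_of_adj hn hXY
  have := hX.2
  have := hY.2
  omega

lemma IsSpikeLike.mconn_eq_sub_ncard_inter (hM : IsSpikeLike M) (hn : 2 ≤ n)
    (hmem : ∀ Y ∈ I, mrank M Y = n - 1)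
    (hnotMem : ∀ Y, IsTransversal Y → Y ∉ I → mrank M Y = n)
    (hX : IsTransversal X) : mconn M X = n - (I ∩ {X, Xᶜ}).ncard := by
  classical
  rw [mconn_eq_of_ground_eq_univ hM.1, hM.mrank_univ hn,
    ncard_inter_pair I (hX.ne_compl (by omega))]
  by_cases hXI : X ∈ I <;> by_cases hXcI : Xᶜ ∈ I <;>
    simp [hXI, hXcI, hmem, hnotMem, hX, hX.compl] <;> omega

lemma IsSpikeLike.exists_indepInHn (hM : IsSpikeLike M) (hn : 2 ≤ n) :
    ∃ I, IndepInHn n I ∧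
      ∀ X, IsTransversal X → mconn M X = n - (I ∩ {X, Xᶜ}).ncard := by
  refine ⟨_, hM.indepInHn hn, fun X hX => hM.mconn_eq_sub_ncard_inter hn
    (fun Y hY => ?_) (fun Y hY hYI => ?_) hX⟩
  · have := hM.le_mrank hn hY.1
    have := hY.2
    omega
  · have := hY.mrank_le (M := M)
    by_contra h
    exact hYI ⟨hY, by omega⟩

end SpikeLike

section Spike

variable {n : ℕ} {I : Set (Set (En n))} {X J J₁ J₂ : Set (En n)} {e : En n}

def IsSpikeIndep (n : ℕ) (I : Set (Set (En n))) (J : Set (En n)) : Prop :=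
  J.ncard ≤ n ∧ (fullLegs J).ncard ≤ 1 ∧ J ∉ I

lemma isSpikeIndep_empty (hn : 0 < n) (hI : ∀ X ∈ I, IsTransversal X) : IsSpikeIndep n I ∅ :=
  ⟨by simp, by simp [fullLegs], fun h => by
    have := (hI ∅ h).ncard_eq
    simp at this
    omega⟩

lemma IsSpikeIndep.subset (hI : ∀ X ∈ I, IsTransversal X) (hJ : IsSpikeIndep n I J)
    (hXJ : X ⊆ J) : IsSpikeIndep n I X := by
  refine ⟨(ncard_le_ncard hXJ).trans hJ.1, (ncard_le_ncard (fullLegs_mono hXJ)).trans hJ.2.1,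
    fun hX => hJ.2.2 ?_⟩
  rwa [← eq_of_subset_of_ncard_le hXJ (by rw [(hI X hX).ncard_eq]; exact hJ.1)]

lemma exists_isSpikeIndep_insert_of_fullLegs_nonempty (hI : ∀ X ∈ I, IsTransversal X)
    (h₁ : IsSpikeIndep n I J₁) (h₂ : IsSpikeIndep n I J₂) (hlt : J₁.ncard < J₂.ncard)
    (hfull : (fullLegs J₁).Nonempty) :
    ∃ e ∈ J₂, e ∉ J₁ ∧ IsSpikeIndep n I (insert e J₁) := by
  obtain ⟨i, hi⟩ := hfull
  -- otherwise `|J₂| ≤ l(J₂) + 1 ≤ l(J₁) + 1 ≤ |J₁|`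
  obtain ⟨e, he₂, he⟩ : ∃ e ∈ J₂, e.1 ∉ metLegs J₁ := by
    by_contra! h
    have hmet : metLegs J₂ ⊆ metLegs J₁ := by
      rintro k (hk | hk) <;> exact h _ hk
    have := ncard_le_ncard hmet
    have := ncard_eq_ncard_metLegs_add_ncard_fullLegs J₁
    have := ncard_eq_ncard_metLegs_add_ncard_fullLegs J₂
    have := (ncard_pos (toFinite _)).2 ⟨i, hi⟩
    have := h₂.2.1
    omega
  have heJ₁ : e ∉ J₁ := fun h => he (mem_metLegs_of_mem h)
  refine ⟨e, he₂, heJ₁, ?_, ?_, fun h => ?_⟩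
  · rw [ncard_insert_of_notMem heJ₁]
    have := h₂.1
    omega
  · rw [fullLegs_insert_of_fst_notMem he]
    exact h₁.2.1
  · exact not_isTransversal_of_mem_fullLegs (fullLegs_mono (subset_insert e J₁) hi) (hI _ h)

lemma exists_isSpikeIndep_insert_of_fullLegs_eq_empty (hI : IndepInHn n I)
    (h₂ : IsSpikeIndep n I J₂) (hlt : J₁.ncard < J₂.ncard) (hfull : fullLegs J₁ = ∅) :
    ∃ e ∈ J₂, e ∉ J₁ ∧ IsSpikeIndep n I (insert e J₁) := by
  by_contra! hfail
  have hmem : ∀ e ∈ J₂, e ∉ J₁ → insert e J₁ ∈ I := by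
    intro e he heJ₁
    by_contra hI'
    refine hfail e he heJ₁ ⟨?_, ?_, hI'⟩
    · rw [ncard_insert_of_notMem heJ₁]
      have := h₂.1
      omega
    · calc (fullLegs (insert e J₁)).ncard ≤ ({e.1} : Set (Fin n)).ncard :=
            ncard_le_ncard (by simpa [hfull] using fullLegs_insert_subset e J₁)
        _ = 1 := ncard_singleton _
  obtain ⟨e, he₂, he₁⟩ : ∃ e ∈ J₂, e ∉ J₁ := by
    by_contra! h
    exact (ncard_le_ncard h).not_gt hlt
  -- two different such augmentations would be adjacent members of `I`
  have hsub : J₂ ⊆ insert e J₁ := by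
    intro x hx
    by_contra hx'
    rw [mem_insert_iff, not_or] at hx'
    have hxe : e ≠ x := Ne.symm hx'.1
    refine hI.2 _ (hmem e he₂ he₁) _ (hmem x hx hx'.2)
      ⟨hI.1 _ (hmem e he₂ he₁), hI.1 _ (hmem x hx hx'.2), ?_⟩
    rw [symmDiff_insert_insert he₁ hx'.2 hxe, ncard_pair hxe]
  have hcard : (insert e J₁).ncard ≤ J₂.ncard := by
    rw [ncard_insert_of_notMem he₁]
    omega
  exact h₂.2.2 (eq_of_subset_of_ncard_le hsub hcard ▸ hmem e he₂ he₁)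

lemma IsSpikeIndep.exists_insert_of_ncard_lt (hI : IndepInHn n I) (h₁ : IsSpikeIndep n I J₁)
    (h₂ : IsSpikeIndep n I J₂) (hlt : J₁.ncard < J₂.ncard) :
    ∃ e ∈ J₂, e ∉ J₁ ∧ IsSpikeIndep n I (insert e J₁) :=
  (fullLegs J₁).eq_empty_or_nonempty.elim
    (exists_isSpikeIndep_insert_of_fullLegs_eq_empty hI h₂ hlt)
    (exists_isSpikeIndep_insert_of_fullLegs_nonempty hI.1 h₁ h₂ hlt)

def spike (hn : 0 < n) (hI : IndepInHn n I) : Matroid (En n) :=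
  (IndepMatroid.ofFinite finite_univ (IsSpikeIndep n I) (isSpikeIndep_empty hn hI.1)
    (fun _ _ hJ hXJ => hJ.subset hI.1 hXJ)
    (fun _ _ h₁ h₂ hlt => h₁.exists_insert_of_ncard_lt hI h₂ hlt)
    (fun _ _ => subset_univ _)).matroid

lemma IsSpikeIndep.ncard_le_freeSpikeRank (hJ : IsSpikeIndep n I J) (hJX : J ⊆ X) :
    J.ncard ≤ freeSpikeRank n X := by
  have := ncard_le_ncard (metLegs_mono hJX)
  have := ncard_le_ncard (fullLegs_mono hJX)
  have := ncard_eq_ncard_metLegs_add_ncard_fullLegs J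
  have := hJ.1
  have := hJ.2.1
  rw [freeSpikeRank_eq_min, legCount_eq_ncard_metLegs]
  omega

lemma exists_isSpikeIndep_subset (hn : 2 ≤ n) (hI : ∀ Y ∈ I, IsTransversal Y) (hX : X ∉ I) :
    ∃ J ⊆ X, IsSpikeIndep n I J ∧ J.ncard = freeSpikeRank n X := by
  have hcard := ncard_eq_ncard_metLegs_add_ncard_fullLegs X
  have hle := legCount_le X
  rw [← legCount_eq_ncard_metLegs] at hcard
  rw [freeSpikeRank_eq_min]
  rcases (fullLegs X).eq_empty_or_nonempty with hfull | ⟨i, hi⟩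
  · rw [hfull, ncard_empty] at hcard ⊢
    exact ⟨X, subset_rfl, ⟨by omega, by simp [hfull], hX⟩, by omega⟩
  · -- one point of each leg met by `X`, and both points of leg `i`
    set B := {p ∈ X | p.2 = true ∨ (p.1, true) ∉ X ∨ p.1 = i}
    have hBmet : metLegs B = metLegs X := by ext; simp [B]; tauto
    have hBfull : fullLegs B = {i} := by
      ext k
      simp only [B, mem_fullLegs, mem_sep_iff, mem_singleton_iff]
      constructor
      · rintro ⟨⟨ht, -⟩, -, h⟩
        simpa [ht] using h
      · rintro rfl
        simp_all
    have hBcard : B.ncard = legCount X + 1 := by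
      rw [ncard_eq_ncard_metLegs_add_ncard_fullLegs, hBmet, hBfull, ncard_singleton]
      rfl
    have hleg : leg n i ⊆ B := leg_subset_iff.2 (hBfull ▸ mem_singleton i)
    have hfull : 1 ≤ (fullLegs X).ncard := (ncard_pos (toFinite _)).2 ⟨i, hi⟩
    have hmet : 1 ≤ legCount X := (ncard_pos (toFinite _)).2 ⟨i, Or.inl hi.1⟩
    obtain ⟨J, hlegJ, hJB, hJ⟩ := exists_subsuperset_card_eq (n := min n (legCount X + 1)) hleg
      (by rw [ncard_leg]; omega) (by omega)
    refine ⟨J, hJB.trans (sep_subset _ _), ⟨by omega, ?_, fun hJI => ?_⟩, by rw [hJ]; omega⟩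
    · calc (fullLegs J).ncard ≤ (fullLegs B).ncard := ncard_le_ncard (fullLegs_mono hJB)
        _ = 1 := by rw [hBfull, ncard_singleton]
    · exact not_isTransversal_of_mem_fullLegs (leg_subset_iff.1 hlegJ) (hI J hJI)

lemma mrank_spike_of_notMem (hn : 2 ≤ n) (hI : IndepInHn n I) (hX : X ∉ I) :
    mrank (spike (by omega) hI) X = freeSpikeRank n X := by
  obtain ⟨J, hJX, hJ, hcard⟩ := exists_isSpikeIndep_subset hn hI.1 hX
  exact le_antisymm (mrank_le fun _ hJ hJX => IsSpikeIndep.ncard_le_freeSpikeRank hJ hJX)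
    (hcard ▸ le_mrank hJ hJX)

lemma mrank_spike_of_mem (hn : 0 < n) (hI : IndepInHn n I) (hX : X ∈ I) :
    mrank (spike hn hI) X = n - 1 := by
  have hT := hI.1 X hX
  obtain ⟨e, he⟩ : X.Nonempty := nonempty_of_ncard_ne_zero (by rw [hT.ncard_eq]; omega)
  refine le_antisymm (mrank_le fun J hJ hJX => ?_) ?_
  · have := ncard_lt_ncard (hJX.ssubset_of_ne fun h => hJ.2.2 (h ▸ hX))
    rw [hT.ncard_eq] at this
    omega
  · have hcard : (X \ {e}).ncard = n - 1 := by rw [ncard_sdiff_singleton_of_mem he, hT.ncard_eq]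
    refine hcard ▸ le_mrank ⟨by omega, ?_, fun h => ?_⟩ sdiff_subset
    · exact (ncard_le_ncard (fullLegs_mono sdiff_subset)).trans
        (by simp [(isTransversal_iff.1 hT).2])
    · have := (hI.1 _ h).ncard_eq
      omega

lemma isSpikeLike_spike (hn : 2 ≤ n) (hI : IndepInHn n I) :
    IsSpikeLike (spike (by omega) hI) := by
  refine ⟨rfl, fun X hX => ?_⟩
  have hXc : ¬ IsTransversal Xᶜ := fun h => hX (compl_compl X ▸ h.compl)
  have huniv : ¬ IsTransversal (univ : Set (En n)) :=
    not_isTransversal_of_mem_fullLegs (i := ⟨0, by omega⟩) (by simp)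
  rw [mconn_eq_of_ground_eq_univ rfl, lamN, mrank_spike_of_notMem hn hI (fun h => hX (hI.1 X h)),
    mrank_spike_of_notMem hn hI (fun h => hXc (hI.1 _ h)),
    mrank_spike_of_notMem hn hI (fun h => huniv (hI.1 _ h)),
    freeSpikeRank_of_metLegs_eq_univ (X := univ) (by simp [metLegs])]

lemma mconn_spike_of_isTransversal (hn : 2 ≤ n) (hI : IndepInHn n I) (hX : IsTransversal X) :
    mconn (spike (by omega) hI) X = n - (I ∩ {X, Xᶜ}).ncard :=
  (isSpikeLike_spike hn hI).mconn_eq_sub_ncard_inter hn (fun _ => mrank_spike_of_mem _ hI)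
    (fun Y hY hYI => by
      rw [mrank_spike_of_notMem hn hI hYI,
        freeSpikeRank_of_metLegs_eq_univ (isTransversal_iff.1 hY).1])
    hX

end Spike

/-- A spiky function is the connectivity function of a matroid iff there is an independent
set `I` of `H_n` with `λ(X) = n − |I ∩ {X, E_n − X}|` for every transversal `X`. -/
theorem stmt12 {n : ℕ} (hn : 2 < n) (lam : Set (En n) → ℕ) (hs : IsSpiky n lam) :
    (∃ M : Matroid (En n), M.E = Set.univ ∧ ∀ X, (lam X : ℤ) = mconn M X) ↔
    (∃ I : Set (Set (En n)), IndepInHn n I ∧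
      ∀ X, IsTransversal X → (lam X : ℤ) = (n : ℤ) - ((I ∩ {X, Xᶜ}).ncard : ℤ)) := by
  constructor
  · rintro ⟨M, hE, hconn⟩
    have hM : IsSpikeLike M := ⟨hE, fun X hX => (hconn X).symm.trans (hs.2.1 X hX)⟩
    obtain ⟨I, hI, hconnI⟩ := hM.exists_indepInHn hn.le
    exact ⟨I, hI, fun X hX => (hconn X).trans (hconnI X hX)⟩
  · rintro ⟨I, hI, hform⟩
    refine ⟨spike (by omega) hI, rfl, fun X => ?_⟩
    by_cases hX : IsTransversal X
    · rw [hform X hX, mconn_spike_of_isTransversal hn.le hI hX]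
    · rw [hs.2.1 X hX, (isSpikeLike_spike hn.le hI).2 X hX]
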